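/- arXiv:0709.0700 — 6 statements merged into one kernel-verified Lean document; each statement's English description precedes it below -/
import Mathlib

section
/- Let A be a 2×2 real matrix with det A = 1 and |tr A| > 2 (so A is hyperbolic, with real eigenvalues σ and σ⁻¹ where |σ| > 1). Let E^u be the eigenline of A for the eigenvalue σ and E^s the eigenline for the eigenvalue σ⁻¹. If θ ∈ ℝ is such that the rotation R_θ maps the line E^u onto the line E^s, then the matrix A·R_θ is elliptic, i.e. |tr(A·R_θ)| < 2 (equivalently, A·R_θ has no real eigenvalues). -/
/-! With `J` the quarter turn, every 2×2 matrix satisfies `tr M ⟨u, u⟩ = ⟨M u, u⟩ + ⟨M J u, J u⟩`.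
Take `M = A R_θ` and write `R_θ u = c v`. Since `R_θ` commutes with `J`, `A v = σ⁻¹ v`, and
`Aᵀ J A = J` for `det A = 1`, both terms equal `c σ⁻¹ ⟨u, v⟩`, so `σ tr(A R_θ) ⟨u, u⟩ = 2 c ⟨u, v⟩`.
As `R_θ` is an isometry, `|c| ‖v‖ = ‖u‖`, and Cauchy–Schwarz gives `|σ| |tr(A R_θ)| ≤ 2`. -/

open Matrix Real

/-- The rotation matrix of angle `ξ`. -/
noncomputable def rotMat (ξ : ℝ) : Matrix (Fin 2) (Fin 2) ℝ :=
  !![Real.cos ξ, -Real.sin ξ; Real.sin ξ, Real.cos ξ]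

def quarterTurn (R : Type*) [Ring R] : Matrix (Fin 2) (Fin 2) R :=
  !![0, -1; 1, 0]

section CommRing

variable {R : Type*} [CommRing R]

lemma trace_mul_dotProduct_self_eq (M : Matrix (Fin 2) (Fin 2) R) (x : Fin 2 → R) :
    M.trace * (x ⬝ᵥ x) =
      M *ᵥ x ⬝ᵥ x + M *ᵥ (quarterTurn R *ᵥ x) ⬝ᵥ quarterTurn R *ᵥ x := by
  simp only [quarterTurn, trace_fin_two, mulVec, dotProduct, Fin.sum_univ_two, of_apply,
    cons_val', cons_val_zero, cons_val_one, cons_val_fin_one]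
  ring

-- This is `Aᵀ J A = (det A) J`, i.e. `SL(2) = Sp(2)`.
lemma mulVec_quarterTurn_dotProduct (A : Matrix (Fin 2) (Fin 2) R) (x y : Fin 2 → R) :
    A *ᵥ (quarterTurn R *ᵥ x) ⬝ᵥ quarterTurn R *ᵥ (A *ᵥ y) = A.det * (x ⬝ᵥ y) := by
  simp only [quarterTurn, det_fin_two, mulVec, dotProduct, Fin.sum_univ_two, of_apply,
    cons_val', cons_val_zero, cons_val_one, cons_val_fin_one]
  ring

theorem trace_mul_mul_dotProduct_self {A B : Matrix (Fin 2) (Fin 2) R} (hdet : A.det = 1)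
    (hB : B * quarterTurn R = quarterTurn R * B) {σ τ c : R} (hστ : σ * τ = 1)
    {u v : Fin 2 → R} (hu : A *ᵥ u = σ • u) (hv : A *ᵥ v = τ • v) (hBu : B *ᵥ u = c • v) :
    σ * (A * B).trace * (u ⬝ᵥ u) = 2 * c * (u ⬝ᵥ v) := by
  have hBJu : B *ᵥ (quarterTurn R *ᵥ u) = c • (quarterTurn R *ᵥ v) := by
    rw [mulVec_mulVec, hB, ← mulVec_mulVec, hBu, mulVec_smul]
  have hsymp := mulVec_quarterTurn_dotProduct A v u
  rw [hu, mulVec_smul, dotProduct_smul, hdet, one_mul, smul_eq_mul, dotProduct_comm v u] at hsymp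
  rw [mul_assoc, trace_mul_dotProduct_self_eq, ← mulVec_mulVec, ← mulVec_mulVec, hBu, hBJu,
    mulVec_smul, mulVec_smul, hv, smul_dotProduct, smul_dotProduct, smul_eq_mul, smul_eq_mul,
    smul_dotProduct, smul_eq_mul, dotProduct_comm v u]
  linear_combination c * hsymp + c * (u ⬝ᵥ v) * hστ

end CommRing

lemma rotMat_mul_quarterTurn (θ : ℝ) : rotMat θ * quarterTurn ℝ = quarterTurn ℝ * rotMat θ := by
  ext i j
  fin_cases i <;> fin_cases j <;> simp [rotMat, quarterTurn]

lemma rotMat_mulVec_dotProduct_self (θ : ℝ) (x : Fin 2 → ℝ) :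
    rotMat θ *ᵥ x ⬝ᵥ rotMat θ *ᵥ x = x ⬝ᵥ x := by
  simp only [rotMat, mulVec, dotProduct, Fin.sum_univ_two, of_apply,
    cons_val', cons_val_zero, cons_val_one, cons_val_fin_one]
  linear_combination (x 0 ^ 2 + x 1 ^ 2) * sin_sq_add_cos_sq θ

lemma abs_mul_dotProduct_le_of_rotMat_mulVec {θ c : ℝ} {u v : Fin 2 → ℝ}
    (h : rotMat θ *ᵥ u = c • v) : |c * (u ⬝ᵥ v)| ≤ u ⬝ᵥ u := by
  have hCS : (u ⬝ᵥ v) ^ 2 ≤ (u ⬝ᵥ u) * (v ⬝ᵥ v) := by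
    simpa only [dotProduct, sq] using Finset.sum_mul_sq_le_sq_mul_sq Finset.univ u v
  have hlen : c ^ 2 * (v ⬝ᵥ v) = u ⬝ᵥ u := by
    rw [← rotMat_mulVec_dotProduct_self θ u, h, smul_dotProduct, dotProduct_smul, smul_eq_mul,
      smul_eq_mul]
    ring
  refine abs_le_of_sq_le_sq ?_ (by simpa using dotProduct_star_self_nonneg u)
  calc (c * (u ⬝ᵥ v)) ^ 2 ≤ c ^ 2 * ((u ⬝ᵥ u) * (v ⬝ᵥ v)) := by
        rw [mul_pow]; gcongr
    _ = (u ⬝ᵥ u) ^ 2 := by rw [← hlen]; ring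

theorem hyperbolic_mul_rotation_elliptic_general
    (A : Matrix (Fin 2) (Fin 2) ℝ) (hdet : A.det = 1)
    (σ : ℝ) (hσ : |σ| > 1)
    (u v : Fin 2 → ℝ) (hu : u ≠ 0)
    (huEig : A.mulVec u = σ • u) (hvEig : A.mulVec v = σ⁻¹ • v)
    (θ : ℝ) (hrot : ∃ c : ℝ, (rotMat θ).mulVec u = c • v) :
    |(A * rotMat θ).trace| < 2 := by
  obtain ⟨c, hc⟩ := hrot
  have hσ0 : σ ≠ 0 := by rintro rfl; norm_num at hσ
  have hN : 0 < u ⬝ᵥ u := by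
    refine lt_of_le_of_ne (by simpa using dotProduct_star_self_nonneg u) ?_
    exact Ne.symm (dotProduct_self_eq_zero.not.mpr hu)
  have htrace := trace_mul_mul_dotProduct_self hdet (rotMat_mul_quarterTurn θ)
    (mul_inv_cancel₀ hσ0) huEig hvEig hc
  have hbound : |σ| * |(A * rotMat θ).trace| * (u ⬝ᵥ u) ≤ 2 * (u ⬝ᵥ u) := by
    have := congrArg abs htrace
    rw [abs_mul, abs_mul, abs_of_pos hN, mul_assoc 2, abs_mul, abs_two] at this
    linarith [abs_mul_dotProduct_le_of_rotMat_mulVec hc]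
  have hσtr := le_of_mul_le_mul_right hbound hN
  nlinarith [abs_nonneg (A * rotMat θ).trace]

/-- If `A ∈ SL(2,ℝ)` is hyperbolic (`|tr A| > 2`), with eigenvalue `σ`, `|σ| > 1`,
eigenline `ℝu`, and eigenvalue `σ⁻¹` with eigenline `ℝv`, and the rotation `R_θ`
maps the line `ℝu` onto the line `ℝv`, then `A · R_θ` is elliptic: `|tr (A·R_θ)| < 2`. -/
theorem hyperbolic_mul_rotation_elliptic
    (A : Matrix (Fin 2) (Fin 2) ℝ) (hdet : A.det = 1) (htr : |A.trace| > 2)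
    (σ : ℝ) (hσ : |σ| > 1)
    (u v : Fin 2 → ℝ) (hu : u ≠ 0) (hv : v ≠ 0)
    (huEig : A.mulVec u = σ • u) (hvEig : A.mulVec v = σ⁻¹ • v)
    (θ : ℝ) (hrot : ∃ c : ℝ, (rotMat θ).mulVec u = c • v) :
    |(A * rotMat θ).trace| < 2 :=
  hyperbolic_mul_rotation_elliptic_general A hdet σ hσ u v hu huEig hvEig θ hrot
end

section
/- Let θ ∈ (0, π) and let f : ℝ → ℝ be a strictly increasing continuous map satisfying f(x+π) = f(x)+π for all x ∈ ℝ. Suppose there are real numbers x^s < x^u with x^u − x^s = θ such that f(x^s) = x^s, f(x^u) = x^u, f(x) < x for all x ∈ (x^s, x^u), and f(x) > x for all x ∈ (x^u, x^s + π). Then f(x) − x > −θ for all x ∈ ℝ, and consequently the map g(x) := f(x + θ) satisfies g(x) > x for all x ∈ ℝ (in particular g has no fixed points). -/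
open Real Set

/-- Displacement estimate for a lift of a circle (projective line) homeomorphism:
if `f` is a strictly increasing continuous lift commuting with translation by `π`,
with fixed points `x^s < x^u` at distance `θ ∈ (0,π)`, `f < id` on `(x^s, x^u)` and
`f > id` on `(x^u, x^s + π)`, then `f(x) - x > -θ` everywhere, and hence
`g(x) = f(x+θ)` satisfies `g(x) > x` for all `x`. -/
theorem lift_displacement_gt_neg_angle
    (θ : ℝ) (hθ : θ ∈ Set.Ioo 0 π)
    (f : ℝ → ℝ) (hmono : StrictMono f) (hcont : Continuous f)
    (hper : ∀ x : ℝ, f (x + π) = f x + π)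
    (xs xu : ℝ) (hlt : xs < xu) (hdist : xu - xs = θ)
    (hfs : f xs = xs) (hfu : f xu = xu)
    (hbelow : ∀ x ∈ Set.Ioo xs xu, f x < x)
    (habove : ∀ x ∈ Set.Ioo xu (xs + π), f x > x) :
    (∀ x : ℝ, f x - x > -θ) ∧ (∀ x : ℝ, f (x + θ) > x) := by
  obtain ⟨hθ0, hθπ⟩ := hθ
  have hφ : Function.Periodic (fun x => f x - x) π := by
    intro x; simp [hper x]
  have main : ∀ x : ℝ, f x - x > -θ := by
    intro x
    obtain ⟨y, ⟨hy1, hy2⟩, hxy⟩ := hφ.exists_mem_Ico Real.pi_pos x xs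
    rw [hxy]
    rcases eq_or_lt_of_le hy1 with h | h
    · simp [← h, hfs]; linarith
    · rcases lt_trichotomy y xu with h2 | h2 | h2
      · have : f xs < f y := hmono h
        rw [hfs] at this
        have : y - θ < xs := by linarith
        linarith
      · subst h2; rw [hfu]; linarith
      · have := habove y ⟨h2, hy2⟩
        linarith
  refine ⟨main, fun x => ?_⟩
  have := main (x + θ)
  linarith
end

section
/- Let θ ∈ (0, π/2]. Let u₁, u₂ be unit vectors in ℝ² (Euclidean) such that the angle between the lines ℝu₁ and ℝu₂ is at least θ, and let w₁, w₂ be unit vectors in ℝ² such that the angle between the lines ℝw₁ and ℝw₂ is at least θ. Let T : ℝ² → ℝ² be a linear map and let a₁₁, a₂₁, a₁₂, a₂₂ ∈ ℝ be defined by T u₁ = a₁₁ w₁ + a₂₁ w₂ and T u₂ = a₁₂ w₁ + a₂₂ w₂. Set ‖T‖_* := max{|a₁₁|, |a₁₂|, |a₂₁|, |a₂₂|} and let ‖T‖ be the operator norm of T with respect to the Euclidean norm. Then: (1) ‖T‖ ≤ 4·sin(θ)⁻¹·‖T‖_*, and (2) ‖T‖_* ≤ sin(θ)⁻¹·‖T‖.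 -/
/-!
For unit vectors `u₁, u₂` with `|⟪u₁, u₂⟫| ≤ cos θ`, expanding the square gives
`‖a u₁ + b u₂‖² = a² (1 - ⟪u₁, u₂⟫²) + (b + a ⟪u₁, u₂⟫)² ≥ a² sin² θ`, so both coordinates of a
vector in such a basis are at most `‖v‖ / sin θ`. In the basis `(w₁, w₂)` this bounds the entries
of the matrix of `T` by `‖T u_j‖ / sin θ ≤ ‖T‖ / sin θ`. In the basis `(u₁, u₂)` it gives
`‖T x‖ ≤ (|x₁| + |x₂|) max_j ‖T u_j‖ ≤ (2 ‖x‖ / sin θ) (2 ‖T‖_*)`.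
-/

open Set Real
open scoped RealInnerProductSpace

/-- The Euclidean plane. -/
abbrev E2 : Type := EuclideanSpace ℝ (Fin 2)

/-- The angle in `[0, π/2]` between the lines `ℝu` and `ℝv` in the Euclidean plane. -/
noncomputable def lineAngle (u v : E2) : ℝ := Real.arccos (|⟪u, v⟫| / (‖u‖ * ‖v‖))

lemma abs_inner_le_cos_of_le_lineAngle {u v : E2} {θ : ℝ} (hu : ‖u‖ = 1) (hv : ‖v‖ = 1)
    (hθ : 0 ≤ θ) (h : θ ≤ lineAngle u v) : |⟪u, v⟫| ≤ cos θ := by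
  rw [lineAngle, hu, hv, mul_one, div_one] at h
  have h₁ : |⟪u, v⟫| ≤ 1 := by simpa [hu, hv] using abs_real_inner_le_norm u v
  calc |⟪u, v⟫| = cos (arccos |⟪u, v⟫|) :=
        (cos_arccos (by linarith [abs_nonneg ⟪u, v⟫]) h₁).symm
    _ ≤ cos θ := cos_le_cos_of_nonneg_of_le_pi hθ (arccos_le_pi _) h

section UnitPair

variable {F : Type*} [NormedAddCommGroup F] [InnerProductSpace ℝ F] {u₁ u₂ : F} {θ : ℝ}

lemma sq_mul_one_sub_inner_sq_le_norm_sq (hu₁ : ‖u₁‖ = 1) (hu₂ : ‖u₂‖ = 1) (a b : ℝ) :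
    a ^ 2 * (1 - ⟪u₁, u₂⟫ ^ 2) ≤ ‖a • u₁ + b • u₂‖ ^ 2 := by
  rw [norm_add_sq_real, norm_smul, norm_smul, inner_smul_left, inner_smul_right, hu₁, hu₂]
  simp only [Real.norm_eq_abs, mul_one, conj_trivial]
  nlinarith [sq_nonneg (b + a * ⟪u₁, u₂⟫), sq_abs a, sq_abs b]

lemma abs_mul_abs_sin_le_norm_smul_add_smul (hu₁ : ‖u₁‖ = 1) (hu₂ : ‖u₂‖ = 1)
    (h : |⟪u₁, u₂⟫| ≤ cos θ) (a b : ℝ) : |a| * |sin θ| ≤ ‖a • u₁ + b • u₂‖ := by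
  have hcos : ⟪u₁, u₂⟫ ^ 2 ≤ cos θ ^ 2 := sq_le_sq.mpr (h.trans (le_abs_self _))
  refine (abs_le_of_sq_le_sq' ?_ (norm_nonneg _)).2
  calc (|a| * |sin θ|) ^ 2 = a ^ 2 * (1 - cos θ ^ 2) := by rw [mul_pow, sq_abs, sq_abs, sin_sq]
    _ ≤ a ^ 2 * (1 - ⟪u₁, u₂⟫ ^ 2) := by gcongr
    _ ≤ ‖a • u₁ + b • u₂‖ ^ 2 := sq_mul_one_sub_inner_sq_le_norm_sq hu₁ hu₂ a b

lemma abs_le_inv_sin_mul_norm_smul_add_smul (hu₁ : ‖u₁‖ = 1) (hu₂ : ‖u₂‖ = 1)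
    (h : |⟪u₁, u₂⟫| ≤ cos θ) (hθ : 0 < sin θ) (a b : ℝ) :
    |a| ≤ (sin θ)⁻¹ * ‖a • u₁ + b • u₂‖ ∧ |b| ≤ (sin θ)⁻¹ * ‖a • u₁ + b • u₂‖ := by
  have h' : |⟪u₂, u₁⟫| ≤ cos θ := by rwa [real_inner_comm]
  rw [inv_mul_eq_div, le_div_iff₀ hθ, le_div_iff₀ hθ, ← abs_of_pos hθ]
  refine ⟨abs_mul_abs_sin_le_norm_smul_add_smul hu₁ hu₂ h a b, ?_⟩
  rw [add_comm]
  exact abs_mul_abs_sin_le_norm_smul_add_smul hu₂ hu₁ h' b a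

lemma linearIndependent_pair_of_abs_inner_le_cos (hu₁ : ‖u₁‖ = 1) (hu₂ : ‖u₂‖ = 1)
    (h : |⟪u₁, u₂⟫| ≤ cos θ) (hθ : 0 < sin θ) : LinearIndependent ℝ ![u₁, u₂] := by
  refine LinearIndependent.pair_iff.mpr fun a b hab => ?_
  simpa only [hab, norm_zero, mul_zero, abs_nonpos_iff] using
    abs_le_inv_sin_mul_norm_smul_add_smul hu₁ hu₂ h hθ a b

lemma exists_smul_add_smul_eq_of_abs_inner_le_cos [FiniteDimensional ℝ F]
    (hF : Module.finrank ℝ F = 2) (hu₁ : ‖u₁‖ = 1) (hu₂ : ‖u₂‖ = 1)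
    (h : |⟪u₁, u₂⟫| ≤ cos θ) (hθ : 0 < sin θ) (x : F) : ∃ a b : ℝ, a • u₁ + b • u₂ = x := by
  have hspan := (linearIndependent_pair_of_abs_inner_le_cos hu₁ hu₂ h hθ)
    |>.span_eq_top_of_card_eq_finrank' (by simp [hF])
  rw [Matrix.range_cons_cons_empty] at hspan
  exact Submodule.mem_span_pair.mp (hspan ▸ Submodule.mem_top)

lemma opNorm_le_of_norm_apply_le_of_abs_inner_le_cos [FiniteDimensional ℝ F]
    (hF : Module.finrank ℝ F = 2) (hu₁ : ‖u₁‖ = 1) (hu₂ : ‖u₂‖ = 1)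
    (h : |⟪u₁, u₂⟫| ≤ cos θ) (hθ : 0 < sin θ)
    {G : Type*} [NormedAddCommGroup G] [NormedSpace ℝ G] (T : F →L[ℝ] G) {K : ℝ}
    (h₁ : ‖T u₁‖ ≤ K) (h₂ : ‖T u₂‖ ≤ K) : ‖T‖ ≤ 2 * (sin θ)⁻¹ * K := by
  have hK : 0 ≤ K := (norm_nonneg _).trans h₁
  refine T.opNorm_le_bound (by positivity) fun x => ?_
  obtain ⟨a, b, rfl⟩ := exists_smul_add_smul_eq_of_abs_inner_le_cos hF hu₁ hu₂ h hθ x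
  obtain ⟨ha, hb⟩ := abs_le_inv_sin_mul_norm_smul_add_smul hu₁ hu₂ h hθ a b
  calc ‖T (a • u₁ + b • u₂)‖ ≤ ‖a • T u₁‖ + ‖b • T u₂‖ := by
        rw [map_add, map_smul, map_smul]; exact norm_add_le _ _
    _ = |a| * ‖T u₁‖ + |b| * ‖T u₂‖ := by simp only [norm_smul, Real.norm_eq_abs]
    _ ≤ (|a| + |b|) * K := by rw [add_mul]; gcongr
    _ ≤ (2 * (sin θ)⁻¹ * ‖a • u₁ + b • u₂‖) * K := by gcongr; linarith
    _ = 2 * (sin θ)⁻¹ * K * ‖a • u₁ + b • u₂‖ := by ring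

end UnitPair

/-- Comparison between the operator norm and the "norm of the maximum" of the matrix of a
linear map with respect to bases of unit vectors whose lines make an angle at least `θ`:
`‖T‖ ≤ 4 sin(θ)⁻¹ ‖T‖_*` and `‖T‖_* ≤ sin(θ)⁻¹ ‖T‖`. -/
theorem opNorm_vs_maxNorm
    (θ : ℝ) (hθ : θ ∈ Set.Ioc 0 (π / 2))
    (u₁ u₂ w₁ w₂ : E2)
    (hu₁ : ‖u₁‖ = 1) (hu₂ : ‖u₂‖ = 1) (hw₁ : ‖w₁‖ = 1) (hw₂ : ‖w₂‖ = 1)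
    (hangu : θ ≤ lineAngle u₁ u₂) (hangw : θ ≤ lineAngle w₁ w₂)
    (T : E2 →L[ℝ] E2) (a₁₁ a₂₁ a₁₂ a₂₂ : ℝ)
    (hTu₁ : T u₁ = a₁₁ • w₁ + a₂₁ • w₂) (hTu₂ : T u₂ = a₁₂ • w₁ + a₂₂ • w₂) :
    ‖T‖ ≤ 4 * (Real.sin θ)⁻¹ * max (max |a₁₁| |a₁₂|) (max |a₂₁| |a₂₂|) ∧
    max (max |a₁₁| |a₁₂|) (max |a₂₁| |a₂₂|) ≤ (Real.sin θ)⁻¹ * ‖T‖ := by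
  have hsin : 0 < sin θ := sin_pos_of_pos_of_lt_pi hθ.1 (by linarith [pi_pos, hθ.2])
  have hcos_u := abs_inner_le_cos_of_le_lineAngle hu₁ hu₂ hθ.1.le hangu
  have hcos_w := abs_inner_le_cos_of_le_lineAngle hw₁ hw₂ hθ.1.le hangw
  set M := max (max |a₁₁| |a₁₂|) (max |a₂₁| |a₂₂|)
  have hcomb_le {a b : ℝ} (ha : |a| ≤ M) (hb : |b| ≤ M) : ‖a • w₁ + b • w₂‖ ≤ 2 * M :=
    calc ‖a • w₁ + b • w₂‖ ≤ ‖a • w₁‖ + ‖b • w₂‖ := norm_add_le _ _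
      _ = |a| + |b| := by simp only [norm_smul, hw₁, hw₂, mul_one, Real.norm_eq_abs]
      _ ≤ 2 * M := by linarith
  have hcoord_le {u : E2} {a b : ℝ} (hu : ‖u‖ = 1) (hTu : T u = a • w₁ + b • w₂) :
      |a| ≤ (sin θ)⁻¹ * ‖T‖ ∧ |b| ≤ (sin θ)⁻¹ * ‖T‖ := by
    have hTu_norm : ‖T u‖ ≤ ‖T‖ := T.unit_le_opNorm u hu.le
    obtain ⟨ha, hb⟩ := abs_le_inv_sin_mul_norm_smul_add_smul hw₁ hw₂ hcos_w hsin a b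
    rw [← hTu] at ha hb
    exact ⟨ha.trans (by gcongr), hb.trans (by gcongr)⟩
  constructor
  · calc ‖T‖ ≤ 2 * (sin θ)⁻¹ * (2 * M) :=
          opNorm_le_of_norm_apply_le_of_abs_inner_le_cos finrank_euclideanSpace_fin hu₁ hu₂ hcos_u
            hsin T (hTu₁ ▸ hcomb_le (by simp [M]) (by simp [M]))
            (hTu₂ ▸ hcomb_le (by simp [M]) (by simp [M]))
      _ = 4 * (sin θ)⁻¹ * M := by ring
  · obtain ⟨h₁₁, h₂₁⟩ := hcoord_le hu₁ hTu₁
    obtain ⟨h₁₂, h₂₂⟩ := hcoord_le hu₂ hTu₂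
    exact max_le (max_le h₁₁ h₁₂) (max_le h₂₁ h₂₂)
end

section
/- Let Λ be a nonempty compact topological space and let φ : ℝ × Λ → Λ be a continuous flow, i.e. φ is jointly continuous, φ(0,x) = x and φ(s+t,x) = φ(s, φ(t,x)) for all s,t ∈ ℝ and x ∈ Λ. Let a : Λ × ℝ → ℝ be jointly continuous with a(x,t) > 0 for all x,t, and satisfying the multiplicative cocycle identity a(x, s+t) = a(φ(t,x), s)·a(x,t) for all x ∈ Λ and all s, t ≥ 0. Then the following are equivalent: (i) there exist constants C > 0 and γ ∈ (0,1) such that a(x,t) ≤ C·γ^t for all x ∈ Λ and all t ≥ 0; (ii) there exists m ∈ ℕ, m ≥ 1, such that a(x,m) ≤ 1/2 for all x ∈ Λ. -/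
open Set

/-- Equivalence between uniform exponential decay and `m`-domination for a continuous
positive multiplicative cocycle `a` over a continuous flow `φ` on a nonempty compact space:
(i) `a(x,t) ≤ C·γ^t` for all `t ≥ 0` (some `C > 0`, `γ ∈ (0,1)`) iff
(ii) `a(x,m) ≤ 1/2` for all `x` (some integer `m ≥ 1`). -/
theorem cocycle_exponential_decay_iff_m_domination
    (Λ : Type*) [TopologicalSpace Λ] [CompactSpace Λ] [Nonempty Λ]
    (φ : ℝ → Λ → Λ) (hφcont : Continuous fun p : ℝ × Λ => φ p.1 p.2)
    (hφ0 : ∀ x : Λ, φ 0 x = x)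
    (hφadd : ∀ s t : ℝ, ∀ x : Λ, φ (s + t) x = φ s (φ t x))
    (a : Λ → ℝ → ℝ) (hacont : Continuous fun p : Λ × ℝ => a p.1 p.2)
    (hapos : ∀ x : Λ, ∀ t : ℝ, 0 < a x t)
    (hacoc : ∀ x : Λ, ∀ s t : ℝ, 0 ≤ s → 0 ≤ t → a x (s + t) = a (φ t x) s * a x t) :
    (∃ C : ℝ, 0 < C ∧ ∃ γ : ℝ, γ ∈ Set.Ioo (0 : ℝ) 1 ∧
        ∀ x : Λ, ∀ t : ℝ, 0 ≤ t → a x t ≤ C * γ ^ t) ↔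
    (∃ m : ℕ, 1 ≤ m ∧ ∀ x : Λ, a x (m : ℝ) ≤ 1 / 2) := by
  have ha0 : ∀ x : Λ, a x 0 = 1 := by
    intro x
    have h := hacoc x 0 0 le_rfl le_rfl
    rw [hφ0, add_zero] at h
    have := (hapos x 0).ne'
    nlinarith [hapos x 0]
  constructor
  · rintro ⟨C, hC, γ, ⟨hγ0, hγ1⟩, hbound⟩
    -- pick n with C * γ^n < 1/2
    have htend : Filter.Tendsto (fun n : ℕ => C * γ ^ n) Filter.atTop (nhds 0) := by
      have := tendsto_pow_atTop_nhds_zero_of_lt_one hγ0.le hγ1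
      simpa using this.const_mul C
    have hev : ∀ᶠ n : ℕ in Filter.atTop, C * γ ^ n < 1 / 2 := by
      have := htend.eventually (eventually_lt_nhds (by norm_num : (0:ℝ) < 1/2))
      simpa using this
    obtain ⟨n, hn, hn1⟩ := (hev.and (Filter.eventually_ge_atTop 1)).exists
    refine ⟨n, hn1, fun x => ?_⟩
    have h1 := hbound x n (by positivity)
    have h2 : γ ^ (n : ℝ) = γ ^ n := Real.rpow_natCast γ n
    rw [h2] at h1
    linarith
  · rintro ⟨m, hm1, hm⟩
    have hmpos : (0 : ℝ) < m := by exact_mod_cast hm1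
    -- bound on Λ × [0,m]
    obtain ⟨⟨x0, t0⟩, -, hmax⟩ :=
      (isCompact_univ.prod (isCompact_Icc (a := (0:ℝ)) (b := (m:ℝ)))).exists_isMaxOn
        (⟨⟨Classical.arbitrary Λ, 0⟩, ⟨trivial, le_rfl, hmpos.le⟩⟩)
        hacont.continuousOn
    set M : ℝ := max (a x0 t0) 1 with hM
    have hM1 : (1:ℝ) ≤ M := le_max_right _ _
    have hMb : ∀ x : Λ, ∀ r : ℝ, 0 ≤ r → r ≤ m → a x r ≤ M := by
      intro x r hr hrm
      exact le_trans (hmax (show (x, r) ∈ (univ ×ˢ Icc (0:ℝ) (m:ℝ)) from ⟨trivial, hr, hrm⟩)) (le_max_left _ _)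
    -- iterate cocycle
    have hiter : ∀ k : ℕ, ∀ x : Λ, a x (k * m) ≤ (1/2 : ℝ) ^ k := by
      intro k
      induction k with
      | zero => intro x; simp [ha0 x]
      | succ k ih =>
        intro x
        have hkm : (0:ℝ) ≤ k * m := by positivity
        have heq : ((k+1 : ℕ) : ℝ) * m = (m : ℝ) + k * m := by push_cast; ring
        rw [heq, hacoc x m (k*m) hmpos.le hkm]
        have h1 := hm (φ (k*m) x)
        have h2 := ih x
        have h3 := hapos (φ (k*m) x) m
        have h4 := hapos x (k*m)
        calc a (φ (k*m) x) m * a x (k*m) ≤ (1/2) * (1/2)^k := by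
              apply mul_le_mul h1 h2 h4.le (by norm_num)
          _ = (1/2)^(k+1) := by ring
    -- define γ
    set γ : ℝ := (1/2 : ℝ) ^ ((m : ℝ)⁻¹) with hγdef
    have hγ0 : 0 < γ := Real.rpow_pos_of_pos (by norm_num) _
    have hγ1 : γ < 1 := Real.rpow_lt_one (by norm_num) (by norm_num) (by positivity)
    refine ⟨2 * M, by linarith, γ, ⟨hγ0, hγ1⟩, fun x t ht => ?_⟩
    set k : ℕ := ⌊t / m⌋₊ with hk
    have hkle : (k : ℝ) * m ≤ t := by
      have := Nat.floor_le (by positivity : (0:ℝ) ≤ t / m)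
      calc (k : ℝ) * m ≤ (t / m) * m := by nlinarith
        _ = t := by field_simp
    have hlt : t < ((k : ℝ) + 1) * m := by
      have := Nat.lt_floor_add_one (t / m)
      calc t = (t / m) * m := by field_simp
        _ < ((k : ℝ) + 1) * m := by nlinarith
    set r : ℝ := t - k * m with hr
    have hr0 : 0 ≤ r := by simp [hr]; linarith
    have hrm : r ≤ m := by simp [hr]; nlinarith
    have hsplit : a x t = a (φ (k*m) x) r * a x (k*m) := by
      have : t = r + (k : ℝ) * m := by ring
      rw [this, hacoc x r (k*m) hr0 (by positivity)]
    have hmain : a x t ≤ M * (1/2)^k := by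
      rw [hsplit]
      exact mul_le_mul (hMb _ r hr0 hrm) (hiter k x) (hapos x _).le (by linarith)
    -- relate (1/2)^k to γ^t
    have hγkm : γ ^ ((k : ℝ) * m) = (1/2 : ℝ) ^ k := by
      rw [hγdef, ← Real.rpow_mul (by norm_num) ((m:ℝ)⁻¹) ((k:ℝ)*(m:ℝ)),
        ← Real.rpow_natCast (1/2 : ℝ) k]
      congr 1
      field_simp
    have hγm : γ ^ (m : ℝ) = (1/2 : ℝ) := by
      rw [hγdef, ← Real.rpow_mul (by norm_num)]
      rw [inv_mul_cancel₀ (ne_of_gt hmpos), Real.rpow_one]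
    have hexp : γ ^ ((k:ℝ) * m) ≤ γ ^ t * 2 := by
      have h1 : γ ^ ((k:ℝ)*m) = γ ^ t * γ ^ (-r) := by
        rw [← Real.rpow_add hγ0]; congr 1; ring
      have h2 : γ ^ (-r) ≤ γ ^ (-(m:ℝ)) :=
        Real.rpow_le_rpow_of_exponent_ge hγ0 hγ1.le (by linarith)
      have h3 : γ ^ (-(m:ℝ)) = 2 := by
        rw [Real.rpow_neg hγ0.le, hγm]; norm_num
      rw [h1]
      have := mul_le_mul_of_nonneg_left h2 (Real.rpow_nonneg hγ0.le t)
      rw [h3] at this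
      linarith
    calc a x t ≤ M * (1/2)^k := hmain
      _ = M * (γ ^ ((k:ℝ)*m)) := by rw [hγkm]
      _ ≤ M * (γ ^ t * 2) := by
          apply mul_le_mul_of_nonneg_left hexp (by linarith)
      _ = 2 * M * γ ^ t := by ring
end

section
/- Let α > 0 and θ ∈ (0, π/2]. Suppose Q₁, Q₂ ∈ M₂(ℝ) both realize the pair (α, θ), i.e. each Qᵢ has eigenvalues α and −α, with corresponding real eigenvectors whose spanned lines make angle exactly θ with each other. Then there exists an orthogonal matrix O ∈ M₂(ℝ) (OᵀO = I) such that Q₂ = O·Q₁·Oᵀ. In particular ‖exp(Q₂) − I‖ = ‖exp(Q₁) − I‖, so the quantity ρ_θ(α) := ‖exp(Q) − I‖ is well defined, independent of the choice of Q realizing (α, θ). -/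
/-!
Normalise the eigenvectors of `Q` and complete the `α`-eigenvector `e` to an orthonormal basis
`(e, w)` of the plane; the `(-α)`-eigenline is then spanned by `cos θ • e + sin θ • w`. So `Q` is
pinned down by its values on this frame, and the linear isometry carrying the frame of `Q₁` to
that of `Q₂` conjugates `Q₁` into `Q₂`. Conjugation by a linear isometry commutes with `exp` and
preserves operator norms.
-/

open Set Real
open scoped RealInnerProductSpace

/-- Continuous linear endomorphisms of the Euclidean plane
(2×2 real matrices with the operator norm). -/
abbrev M2 : Type := E2 →L[ℝ] E2

/-- `Q` realizes the pair `(α, θ)`: it has eigenvalues `α` and `-α`, and the angle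
between the corresponding eigenlines is exactly `θ`. -/
def Realizes (Q : M2) (α θ : ℝ) : Prop :=
  ∃ u v : E2, u ≠ 0 ∧ v ≠ 0 ∧ Q u = α • u ∧ Q v = (-α) • v ∧ lineAngle u v = θ

theorem Module.Basis.ext_of_apply_smul_add_smul {K V W : Type*} [Field K] [AddCommGroup V]
    [Module K V] [AddCommGroup W] [Module K W] (b : Module.Basis (Fin 2) K V)
    {f g : V →ₗ[K] W} {c s : K} (hs : s ≠ 0) (h₀ : f (b 0) = g (b 0))
    (h₁ : f (c • b 0 + s • b 1) = g (c • b 0 + s • b 1)) : f = g := by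
  refine b.ext fun i ↦ ?_
  fin_cases i
  · exact h₀
  · simp only [map_add, map_smul, h₀, add_right_inj] at h₁
    exact smul_right_injective W hs h₁

section
variable {E : Type*} [NormedAddCommGroup E] [InnerProductSpace ℝ E]

theorem exists_orthonormal_eq_cos_smul_add_sin_smul {e v : E} {θ : ℝ} (he : ‖e‖ = 1)
    (hv : ‖v‖ = 1) (hev : ⟪e, v⟫ = cos θ) (hθ : sin θ ≠ 0) :
    ∃ w : E, Orthonormal ℝ ![e, w] ∧ v = cos θ • e + sin θ • w := by
  refine ⟨(sin θ)⁻¹ • (v - cos θ • e), ?_, ?_⟩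
  · have hnorm : ‖v - cos θ • e‖ = |sin θ| := by
      rw [← sq_eq_sq₀ (norm_nonneg _) (abs_nonneg _), sq_abs, norm_sub_sq_real, norm_smul,
        real_inner_smul_right, real_inner_comm, hev, he, hv, Real.norm_eq_abs, mul_one, sq_abs]
      linarith [sin_sq_add_cos_sq θ]
    simp [norm_smul, hnorm, hθ, he, inner_sub_right, real_inner_smul_right, hev]
  · rw [smul_smul, mul_inv_cancel₀ hθ, one_smul, add_sub_cancel]
end

section
variable {𝕜 H : Type*} [RCLike 𝕜] [NormedAddCommGroup H] [InnerProductSpace 𝕜 H] [CompleteSpace H]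

theorem LinearIsometryEquiv.conjStarAlgEquiv_apply_of_apply_eq_smul (O : H ≃ₗᵢ[𝕜] H)
    {T : H →L[𝕜] H} {x : H} {μ : 𝕜} (hx : T x = μ • x) :
    O.conjStarAlgEquiv T (O x) = μ • O x := by
  simp [hx]

theorem LinearIsometryEquiv.adjoint_mul_self (O : H ≃ₗᵢ[𝕜] H) :
    ContinuousLinearMap.adjoint (O : H →L[𝕜] H) * O = 1 := by
  rw [O.adjoint_eq_symm]
  ext
  simp

theorem LinearIsometryEquiv.mul_mul_adjoint (O : H ≃ₗᵢ[𝕜] H) (T : H →L[𝕜] H) :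
    (O : H →L[𝕜] H) * T * ContinuousLinearMap.adjoint (O : H →L[𝕜] H) = O.conjStarAlgEquiv T := by
  rw [O.adjoint_eq_symm]
  rfl

theorem LinearIsometryEquiv.norm_conjStarAlgEquiv (O : H ≃ₗᵢ[𝕜] H) (T : H →L[𝕜] H) :
    ‖O.conjStarAlgEquiv T‖ = ‖T‖ := by
  rw [O.conjStarAlgEquiv_apply, ← ContinuousLinearMap.comp_assoc,
    ContinuousLinearMap.opNorm_comp_linearIsometryEquiv]
  exact LinearIsometry.norm_toContinuousLinearMap_comp O.toLinearIsometry

theorem LinearIsometryEquiv.exp_conjStarAlgEquiv (O : H ≃ₗᵢ[𝕜] H) (T : H →L[𝕜] H) :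
    NormedSpace.exp (O.conjStarAlgEquiv T) = O.conjStarAlgEquiv (NormedSpace.exp T) :=
  letI := NormedAlgebra.restrictScalars ℚ 𝕜 (H →L[𝕜] H)
  (NormedSpace.map_exp O.conjStarAlgEquiv
    O.toContinuousLinearEquiv.conjContinuousAlgEquiv.continuous T).symm

theorem LinearIsometryEquiv.norm_exp_conjStarAlgEquiv_sub_one (O : H ≃ₗᵢ[𝕜] H)
    (T : H →L[𝕜] H) :
    ‖NormedSpace.exp (O.conjStarAlgEquiv T) - 1‖ = ‖NormedSpace.exp T - 1‖ := by
  rw [O.exp_conjStarAlgEquiv, ← O.norm_conjStarAlgEquiv (NormedSpace.exp T - 1),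
    _root_.map_sub, _root_.map_one]

end

theorem cos_lineAngle (u v : E2) : cos (lineAngle u v) = |⟪u, v⟫| / (‖u‖ * ‖v‖) :=
  cos_arccos (by linarith [show 0 ≤ |⟪u, v⟫| / (‖u‖ * ‖v‖) by positivity])
    (div_le_one_of_le₀ (abs_real_inner_le_norm u v) (by positivity))

theorem Realizes.exists_unit_eigenvectors {Q : M2} {α θ : ℝ} (h : Realizes Q α θ) :
    ∃ e v : E2, ‖e‖ = 1 ∧ ‖v‖ = 1 ∧ Q e = α • e ∧ Q v = (-α) • v ∧ ⟪e, v⟫ = cos θ := by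
  obtain ⟨u, v, hu, hv, hQu, hQv, rfl⟩ := h
  obtain ⟨v', hv', hQv', hnorm, hinner⟩ : ∃ v' : E2, v' ≠ 0 ∧ Q v' = (-α) • v' ∧
      ‖v'‖ = ‖v‖ ∧ ⟪u, v'⟫ = |⟪u, v⟫| := by
    rcases le_or_gt 0 ⟪u, v⟫ with hpos | hneg
    · exact ⟨v, hv, hQv, rfl, (abs_of_nonneg hpos).symm⟩
    · exact ⟨-v, neg_ne_zero.2 hv, by rw [map_neg, hQv, smul_neg], norm_neg v,
        by rw [inner_neg_right, abs_of_neg hneg]⟩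
  refine ⟨‖u‖⁻¹ • u, ‖v'‖⁻¹ • v', norm_smul_inv_norm hu, norm_smul_inv_norm hv', ?_, ?_, ?_⟩
  · rw [map_smul, hQu, smul_comm]
  · rw [map_smul, hQv', smul_comm]
  · rw [cos_lineAngle, real_inner_smul_left, real_inner_smul_right, hinner, hnorm]
    field_simp

theorem Realizes.exists_orthonormalBasis {Q : M2} {α θ : ℝ} (h : Realizes Q α θ)
    (hθ : sin θ ≠ 0) :
    ∃ b : OrthonormalBasis (Fin 2) ℝ E2, Q (b 0) = α • b 0 ∧
      Q (cos θ • b 0 + sin θ • b 1) = (-α) • (cos θ • b 0 + sin θ • b 1) := by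
  obtain ⟨e, v, he, hv, hQe, hQv, hev⟩ := h.exists_unit_eigenvectors
  obtain ⟨w, hon, rfl⟩ := exists_orthonormal_eq_cos_smul_add_sin_smul he hv hev hθ
  refine ⟨.mk hon (hon.linearIndependent.span_eq_top_of_card_eq_finrank' (by simp)).ge, ?_⟩
  simpa only [OrthonormalBasis.coe_mk, Matrix.cons_val_zero, Matrix.cons_val_one] using ⟨hQe, hQv⟩

theorem realizes_orthogonally_conjugate_general
    (α : ℝ) (θ : ℝ) (hθ : θ ∈ Set.Ioc 0 (π / 2))
    (Q₁ Q₂ : M2) (h₁ : Realizes Q₁ α θ) (h₂ : Realizes Q₂ α θ) :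
    ∃ O : M2, ContinuousLinearMap.adjoint O * O = 1 ∧
      Q₂ = O * Q₁ * ContinuousLinearMap.adjoint O ∧
      ‖NormedSpace.exp Q₂ - 1‖ = ‖NormedSpace.exp Q₁ - 1‖ := by
  have hsin : sin θ ≠ 0 := (sin_pos_of_pos_of_lt_pi hθ.1 (by linarith [pi_pos, hθ.2])).ne'
  obtain ⟨b₁, hb₁e, hb₁v⟩ := h₁.exists_orthonormalBasis hsin
  obtain ⟨b₂, hb₂e, hb₂v⟩ := h₂.exists_orthonormalBasis hsin
  set O := b₁.equiv b₂ (.refl _)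
  have hO : ∀ i, O (b₁ i) = b₂ i := b₁.equiv_apply_basis b₂ _
  have hv₂ : cos θ • b₂ 0 + sin θ • b₂ 1 = O (cos θ • b₁ 0 + sin θ • b₁ 1) := by
    simp only [map_add, map_smul, hO]
  have hconj : O.conjStarAlgEquiv Q₁ = Q₂ := by
    refine ContinuousLinearMap.coe_injective
      (b₂.toBasis.ext_of_apply_smul_add_smul (c := cos θ) hsin ?_ ?_)
    all_goals simp only [ContinuousLinearMap.coe_coe, OrthonormalBasis.coe_toBasis]
    · rw [hb₂e, ← hO, O.conjStarAlgEquiv_apply_of_apply_eq_smul hb₁e]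
    · rw [hb₂v, hv₂, O.conjStarAlgEquiv_apply_of_apply_eq_smul hb₁v]
  refine ⟨O, O.adjoint_mul_self, by rw [O.mul_mul_adjoint, hconj], ?_⟩
  rw [← hconj, O.norm_exp_conjStarAlgEquiv_sub_one]

/-- Any two matrices realizing the same pair `(α, θ)` are orthogonally conjugate; in
particular `‖exp(Q) − I‖` depends only on `(α, θ)`. -/
theorem realizes_orthogonally_conjugate
    (α : ℝ) (hα : 0 < α) (θ : ℝ) (hθ : θ ∈ Set.Ioc 0 (π / 2))
    (Q₁ Q₂ : M2) (h₁ : Realizes Q₁ α θ) (h₂ : Realizes Q₂ α θ) :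
    ∃ O : M2, ContinuousLinearMap.adjoint O * O = 1 ∧
      Q₂ = O * Q₁ * ContinuousLinearMap.adjoint O ∧
      ‖NormedSpace.exp Q₂ - 1‖ = ‖NormedSpace.exp Q₁ - 1‖ :=
  realizes_orthogonally_conjugate_general α θ hθ Q₁ Q₂ h₁ h₂
end

section
/- Fix θ ∈ (0, π/2]. Then the function α ↦ ρ_θ(α), defined on (0, +∞) by ρ_θ(α) := ‖exp(Q) − I‖ for any Q ∈ M₂(ℝ) realizing the pair (α, θ), is a strictly increasing continuous bijection from (0, +∞) onto (0, +∞). -/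
open Set Real
open scoped RealInnerProductSpace

theorem exp_apply_of_apply_eq_smul {F : Type*} [NormedAddCommGroup F] [NormedSpace ℝ F]
    [CompleteSpace F] {Q : F →L[ℝ] F} {w : F} {r : ℝ} (h : Q w = r • w) :
    NormedSpace.exp Q w = Real.exp r • w := by
  have hpow (n : ℕ) : (Q ^ n) w = r ^ n • w := by
    induction n with
    | zero => simp
    | succ n ih => rw [pow_succ', mul_apply_eq_comp, ih, map_smul, h, smul_smul, pow_succ]
  have hQ := (NormedSpace.exp_series_hasSum_exp' (𝕂 := ℝ) Q).mapL (ContinuousLinearMap.apply ℝ F w)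
  have hr := (NormedSpace.exp_series_hasSum_exp' (𝕂 := ℝ) r).smul_const w
  rw [← Real.exp_eq_exp_ℝ] at hr
  refine hQ.unique ?_
  simpa [hpow, smul_smul] using hr

theorem ContinuousLinearMap.opNorm_eq_sqrt_of_norm_sq_le {E : Type*} [NormedAddCommGroup E]
    [NormedSpace ℝ E] {A : E →L[ℝ] E} {l : ℝ} (hl : 0 ≤ l)
    (hle : ∀ x, ‖A x‖ ^ 2 ≤ l * ‖x‖ ^ 2) {x₀ : E} (hx₀ : x₀ ≠ 0)
    (heq : ‖A x₀‖ ^ 2 = l * ‖x₀‖ ^ 2) : ‖A‖ = √l := by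
  have hsqrt (x : E) : √(l * ‖x‖ ^ 2) = √l * ‖x‖ := by
    rw [Real.sqrt_mul hl, Real.sqrt_sq (norm_nonneg x)]
  refine le_antisymm (A.opNorm_le_bound (Real.sqrt_nonneg l) fun x ↦ ?_) ?_
  · rw [← hsqrt]
    exact Real.le_sqrt_of_sq_le (hle x)
  · have h : √l * ‖x₀‖ ≤ ‖A‖ * ‖x₀‖ := by
      rw [← hsqrt, ← heq, Real.sqrt_sq (norm_nonneg _)]
      exact A.le_opNorm x₀
    exact le_of_mul_le_mul_right h (norm_pos_iff.mpr hx₀)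

theorem quadratic_form_nonneg {P R S : ℝ} (hP : 0 ≤ P) (hS : 0 ≤ S) (hPS : P * S = R ^ 2)
    (p q : ℝ) : 0 ≤ P * p ^ 2 + 2 * R * p * q + S * q ^ 2 := by
  rcases hP.eq_or_lt with rfl | hP
  · obtain rfl : R = 0 := by simpa [eq_comm] using hPS
    simp only [zero_mul, mul_zero, zero_add]
    positivity
  · refine nonneg_of_mul_nonneg_right ?_ hP
    have : P * (P * p ^ 2 + 2 * R * p * q + S * q ^ 2) = (P * p + R * q) ^ 2 := by
      linear_combination q ^ 2 * hPS
    rw [this]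
    positivity

theorem exists_quadratic_form_eq_zero {P R S : ℝ} (hPS : P * S = R ^ 2) :
    ∃ p q : ℝ, (p ≠ 0 ∨ q ≠ 0) ∧ P * p ^ 2 + 2 * R * p * q + S * q ^ 2 = 0 := by
  by_cases hP : P = 0
  · obtain rfl : R = 0 := by simpa [hP, eq_comm] using hPS
    exact ⟨1, 0, by simp [hP]⟩
  · exact ⟨R, -P, .inr (neg_ne_zero.mpr hP), by linear_combination P * hPS⟩

theorem norm_smul_add_smul_sq {F : Type*} [NormedAddCommGroup F] [InnerProductSpace ℝ F]
    (p q : ℝ) (u v : F) :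
    ‖p • u + q • v‖ ^ 2 = p ^ 2 * ‖u‖ ^ 2 + 2 * p * q * ⟪u, v⟫ + q ^ 2 * ‖v‖ ^ 2 := by
  rw [norm_add_sq_real, norm_smul, norm_smul, real_inner_smul_left, real_inner_smul_right,
    Real.norm_eq_abs, Real.norm_eq_abs, mul_pow, mul_pow, sq_abs, sq_abs]
  ring

theorem LinearIndependent.exists_smul_add_smul_eq {K V : Type*} [Field K] [AddCommGroup V]
    [Module K V] [FiniteDimensional K V] (hV : Module.finrank K V = 2) {u v : V}
    (h : LinearIndependent K ![u, v]) (x : V) : ∃ p q : K, p • u + q • v = x := by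
  have hspan := h.span_eq_top_of_card_eq_finrank' (by simp [hV])
  rw [Matrix.range_cons_cons_empty] at hspan
  exact Submodule.mem_span_pair.mp (hspan ▸ Submodule.mem_top)

theorem ContinuousLinearMap.opNorm_eq_sqrt_of_unit_eigenvectors {F : Type*}
    [NormedAddCommGroup F] [InnerProductSpace ℝ F] {A : F →L[ℝ] F} {u v : F} {a b l : ℝ}
    (hind : LinearIndependent ℝ ![u, v]) (hspan : ∀ x, ∃ p q : ℝ, p • u + q • v = x)
    (hu : ‖u‖ = 1) (hv : ‖v‖ = 1) (hAu : A u = a • u) (hAv : A v = b • v)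
    (ha : a ^ 2 ≤ l) (hb : b ^ 2 ≤ l)
    (hdet : (l - a ^ 2) * (l - b ^ 2) = (⟪u, v⟫ * (l - a * b)) ^ 2) :
    ‖A‖ = √l := by
  have hgap (p q : ℝ) : l * ‖p • u + q • v‖ ^ 2 - ‖A (p • u + q • v)‖ ^ 2 =
      (l - a ^ 2) * p ^ 2 + 2 * (⟪u, v⟫ * (l - a * b)) * p * q + (l - b ^ 2) * q ^ 2 := by
    rw [map_add, map_smul, map_smul, hAu, hAv, smul_smul, smul_smul, norm_smul_add_smul_sq,
      norm_smul_add_smul_sq, hu, hv]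
    ring
  obtain ⟨p, q, hpq, hzero⟩ := exists_quadratic_form_eq_zero hdet
  refine A.opNorm_eq_sqrt_of_norm_sq_le ((sq_nonneg a).trans ha) (fun x ↦ ?_) (x₀ := p • u + q • v)
    ?_ (by linarith [hgap p q])
  · obtain ⟨p, q, rfl⟩ := hspan x
    linarith [hgap p q, quadratic_form_nonneg (sub_nonneg.mpr ha) (sub_nonneg.mpr hb) hdet p q]
  · intro h
    have := LinearIndependent.pair_iff.mp hind p q h
    tauto

theorem linearIndependent_of_apply_eq_smul_of_ne {K V : Type*} [Field K] [AddCommGroup V]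
    [Module K V] {f : V →ₗ[K] V} {u v : V} {a b : K} (hu : u ≠ 0) (hv : v ≠ 0)
    (hfu : f u = a • u) (hfv : f v = b • v) (hab : a ≠ b) : LinearIndependent K ![u, v] := by
  refine Module.End.eigenvectors_linearIndependent' f ![a, b] ?_ ![u, v] ?_
  · intro i j h
    fin_cases i <;> fin_cases j <;> simp_all [eq_comm]
  · intro i
    fin_cases i
    · exact Module.End.hasEigenvector_iff.mpr ⟨Module.End.mem_eigenspace_iff.mpr hfu, hu⟩
    · exact Module.End.hasEigenvector_iff.mpr ⟨Module.End.mem_eigenspace_iff.mpr hfv, hv⟩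


theorem Real.exp_sub_one_eq_two_mul_sinh_half (x : ℝ) :
    exp x - 1 = 2 * sinh (x / 2) * (cosh (x / 2) + sinh (x / 2)) := by
  have h₁ : exp (x / 2) * exp (x / 2) = exp x := by rw [← exp_add, add_halves]
  have h₂ : exp (-(x / 2)) * exp (x / 2) = 1 := by rw [← exp_add, neg_add_cancel, exp_zero]
  rw [cosh_add_sinh, sinh_eq]
  linear_combination h₂ - h₁

theorem Real.sq_exp_neg_sub_one_le {x : ℝ} (hx : 0 ≤ x) : (exp (-x) - 1) ^ 2 ≤ (exp x - 1) ^ 2 := by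
  have hcosh := one_le_cosh x
  rw [cosh_eq] at hcosh
  exact sq_le_sq' (by linarith) (by linarith [exp_le_exp.mpr (by linarith : -x ≤ x)])

noncomputable def rho (θ α : ℝ) : ℝ :=
  2 * sinh (α / 2) * (cosh (α / 2) + √(sinh (α / 2) ^ 2 + cos θ ^ 2)) / sin θ

section rho

variable {θ : ℝ}

theorem rho_zero : rho θ 0 = 0 := by simp [rho]

theorem continuous_rho : Continuous (rho θ) := by
  unfold rho; fun_prop

theorem rho_nonneg (hθ : 0 < sin θ) {α : ℝ} (hα : 0 ≤ α) : 0 ≤ rho θ α := by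
  have : 0 ≤ sinh (α / 2) := sinh_nonneg_iff.mpr (by linarith)
  unfold rho; positivity

theorem strictMonoOn_rho (hθ : 0 < sin θ) : StrictMonoOn (rho θ) (Ici 0) := by
  intro x hx y hy hxy
  have hx2 : 0 ≤ x / 2 := by linarith [mem_Ici.mp hx]
  have hsinh : sinh (x / 2) < sinh (y / 2) := sinh_lt_sinh.mpr (by linarith)
  have hsinh0 : 0 ≤ sinh (x / 2) := sinh_nonneg_iff.mpr hx2
  have hcosh : cosh (x / 2) ≤ cosh (y / 2) := by
    rw [cosh_le_cosh, abs_of_nonneg hx2, abs_of_nonneg (by linarith)]; linarith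
  have hw : √(sinh (x / 2) ^ 2 + cos θ ^ 2) ≤ √(sinh (y / 2) ^ 2 + cos θ ^ 2) := by
    gcongr
  unfold rho
  refine div_lt_div_of_pos_right (mul_lt_mul (by linarith) (by linarith) ?_ ?_) hθ
  · have := cosh_pos (x / 2); positivity
  · linarith

theorem exp_sub_one_le_rho (hθ : 0 < sin θ) {α : ℝ} (hα : 0 ≤ α) : exp α - 1 ≤ rho θ α := by
  have hσ : 0 ≤ sinh (α / 2) := sinh_nonneg_iff.mpr (by linarith)
  have hw : sinh (α / 2) ≤ √(sinh (α / 2) ^ 2 + cos θ ^ 2) :=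
    Real.le_sqrt_of_sq_le (le_add_of_nonneg_right (sq_nonneg _))
  rw [exp_sub_one_eq_two_mul_sinh_half, rho, le_div_iff₀ hθ]
  have hσC : 0 ≤ 2 * sinh (α / 2) * (cosh (α / 2) + sinh (α / 2)) := by
    have := cosh_pos (α / 2); positivity
  calc 2 * sinh (α / 2) * (cosh (α / 2) + sinh (α / 2)) * sin θ
      ≤ 2 * sinh (α / 2) * (cosh (α / 2) + sinh (α / 2)) :=
        mul_le_of_le_one_right hσC (sin_le_one θ)
    _ ≤ 2 * sinh (α / 2) * (cosh (α / 2) + √(sinh (α / 2) ^ 2 + cos θ ^ 2)) := by gcongr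

theorem bijOn_rho (hθ : 0 < sin θ) : BijOn (rho θ) (Ioi 0) (Ioi 0) := by
  have hmono := (strictMonoOn_rho hθ).mono Ioi_subset_Ici_self
  refine ⟨fun x hx ↦ ?_, hmono.injOn, fun y hy ↦ ?_⟩
  · simpa [rho_zero] using
      strictMonoOn_rho hθ (mem_Ici.mpr le_rfl) (mem_Ici.mpr (le_of_lt hx)) hx
  · have hy' : y ∈ Ioc (rho θ 0) (rho θ y) := by
      rw [rho_zero]
      exact ⟨hy, by linarith [add_one_le_exp y, exp_sub_one_le_rho hθ (le_of_lt hy)]⟩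
    obtain ⟨x, hx, rfl⟩ := intermediate_value_Ioc (le_of_lt hy) continuous_rho.continuousOn hy'
    exact ⟨x, hx.1, rfl⟩

theorem rho_sq_det (hθ : sin θ ≠ 0) (α : ℝ) :
    (rho θ α ^ 2 - (exp α - 1) ^ 2) * (rho θ α ^ 2 - (exp (-α) - 1) ^ 2) =
      (cos θ * (rho θ α ^ 2 - (exp α - 1) * (exp (-α) - 1))) ^ 2 := by
  have hC := cosh_sq (α / 2)
  have hw := Real.sq_sqrt (by positivity : 0 ≤ sinh (α / 2) ^ 2 + cos θ ^ 2)
  have hs := sin_sq_add_cos_sq θ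
  rw [exp_sub_one_eq_two_mul_sinh_half, exp_sub_one_eq_two_mul_sinh_half, neg_div, sinh_neg,
    cosh_neg, rho]
  grind

end rho

theorem norm_exp_sub_one_of_realizes {Q : M2} {α θ : ℝ} (hθ : 0 < sin θ) (hα : 0 < α)
    (hQ : Realizes Q α θ) : ‖NormedSpace.exp Q - 1‖ = rho θ α := by
  obtain ⟨u, v, hu, hv, hQu, hQv, hangle⟩ := hQ
  set u₀ := (‖u‖⁻¹ : ℝ) • u
  set v₀ := (‖v‖⁻¹ : ℝ) • v
  have hu₀ : ‖u₀‖ = 1 := norm_smul_inv_norm hu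
  have hv₀ : ‖v₀‖ = 1 := norm_smul_inv_norm hv
  have hQu₀ : Q u₀ = α • u₀ := by rw [map_smul, hQu, smul_comm]
  have hQv₀ : Q v₀ = (-α) • v₀ := by rw [map_smul, hQv, smul_comm]
  have hinner : ⟪u₀, v₀⟫ ^ 2 = cos θ ^ 2 := by
    rw [← hangle, cos_lineAngle, real_inner_smul_left, real_inner_smul_right, div_pow, sq_abs]
    field_simp
  have hind : LinearIndependent ℝ ![u₀, v₀] :=
    linearIndependent_of_apply_eq_smul_of_ne (f := Q.toLinearMap)
      (norm_ne_zero_iff.mp (by simp [hu₀])) (norm_ne_zero_iff.mp (by simp [hv₀])) hQu₀ hQv₀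
      (by linarith)
  have hexp {w : E2} {r : ℝ} (h : Q w = r • w) :
      (NormedSpace.exp Q - 1) w = (exp r - 1) • w := by
    rw [sub_apply, exp_apply_of_apply_eq_smul h, one_apply_eq_self, sub_smul, one_smul]
  have ha : (exp α - 1) ^ 2 ≤ rho θ α ^ 2 :=
    pow_le_pow_left₀ (sub_nonneg.mpr (one_le_exp hα.le)) (exp_sub_one_le_rho hθ hα.le) 2
  rw [← Real.sqrt_sq (rho_nonneg hθ hα.le)]
  refine ContinuousLinearMap.opNorm_eq_sqrt_of_unit_eigenvectors hind
    (hind.exists_smul_add_smul_eq finrank_euclideanSpace_fin) hu₀ hv₀ (hexp hQu₀) (hexp hQv₀) ha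
    ((sq_exp_neg_sub_one_le hα.le).trans ha) ?_
  rw [mul_pow, hinner, ← mul_pow]
  exact rho_sq_det hθ.ne' α

theorem exists_realizes {θ : ℝ} (hθ : θ ∈ Ioc 0 (π / 2)) (α : ℝ) : ∃ Q : M2, Realizes Q α θ := by
  have hs : 0 < sin θ := sin_pos_of_pos_of_lt_pi hθ.1 (by linarith [hθ.2, pi_pos])
  have hc : 0 ≤ cos θ := cos_nonneg_of_mem_Icc ⟨by linarith [hθ.1, pi_pos], hθ.2⟩
  set u : E2 := !₂[1, 0]
  set v : E2 := !₂[cos θ, sin θ]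
  have hu : ‖u‖ = 1 := by simp [u, EuclideanSpace.norm_eq]
  have hv : ‖v‖ = 1 := by simp [v, EuclideanSpace.norm_eq, Fin.sum_univ_two]
  -- `α` times the reflection in `ℝu` along `ℝv`
  let Q : M2 := α • (1 - (2 / sin θ) • (EuclideanSpace.proj (1 : Fin 2)).smulRight v)
  refine ⟨Q, u, v, norm_ne_zero_iff.mp (by simp [hu]), norm_ne_zero_iff.mp (by simp [hv]),
    ?_, ?_, ?_⟩
  · simp [Q, u]
  · simp [Q, v]
    rw [smul_smul, div_mul_cancel₀ 2 hs.ne']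
    module
  · rw [lineAngle, hu, hv]
    simp [u, v, PiLp.inner_apply, Fin.sum_univ_two, abs_of_nonneg hc]
    exact arccos_cos hθ.1.le (by linarith [hθ.2, pi_pos])

/-- For fixed `θ ∈ (0, π/2]`, the function `ρ_θ : (0,∞) → (0,∞)`,
`ρ_θ(α) = ‖exp(Q) − I‖` for any `Q` realizing `(α, θ)`, is a strictly increasing
continuous bijection from `(0, +∞)` onto `(0, +∞)`. -/
theorem rho_strictMono_bijective_in_alpha
    (θ : ℝ) (hθ : θ ∈ Set.Ioc 0 (π / 2)) :
    ∃ ρ : ℝ → ℝ,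
      (∀ α ∈ Set.Ioi (0 : ℝ), ∃ Q : M2, Realizes Q α θ) ∧
      (∀ α ∈ Set.Ioi (0 : ℝ), ∀ Q : M2, Realizes Q α θ →
        ρ α = ‖NormedSpace.exp Q - 1‖) ∧
      StrictMonoOn ρ (Set.Ioi 0) ∧
      ContinuousOn ρ (Set.Ioi 0) ∧
      Set.BijOn ρ (Set.Ioi 0) (Set.Ioi 0) := by
  have hs : 0 < sin θ := sin_pos_of_pos_of_lt_pi hθ.1 (by linarith [hθ.2, pi_pos])
  exact ⟨rho θ, fun α _ ↦ exists_realizes hθ α,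
    fun α hα Q hQ ↦ (norm_exp_sub_one_of_realizes hs hα hQ).symm,
    (strictMonoOn_rho hs).mono Ioi_subset_Ici_self, continuous_rho.continuousOn, bijOn_rho hs⟩
end
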